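/- arXiv:1409.7162 — 3 statements merged into one kernel-verified Lean document; each statement's English description precedes it below -/
import Mathlib

section
/- For every p ∈ ℕ, the mean of the p-th powers of the zeros w₁, …, w_{n−1} of Q satisfies: (1/(n−1)) ∑_{i=1}^{n−1} wᵢᵖ = (n/(n−1))·(1/n) ∑_{j=1}^n z_jᵖ − (p/(n−1)) ∑_{j=1}^n α_j z_jᵖ + (1/(n−1)) ∑′ (−1)ˢ [∏_{t=1}^{s−1} (∑_{j=1}^n α_j z_j^{h_t})] · (∑_{j=1}^n α_j z_j^{q+r}), where ∑′ denotes the sum over all q ∈ {1, …, p−1}, r ∈ {0, …, p−q−1}, s ∈ {2, …, p−q−r+1} and all (h₁, …, h_{s−1}) ∈ ℕ^{s−1} with h₁ + ⋯ + h_{s−1} = p − q − r. -/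
/-!
Reflecting `Q = Λ ∏ᵢ (X - wᵢ)` turns it into the power-series identity
`∏ᵢ (1 - wᵢ X) = ∏ⱼ (1 - zⱼ X) · G` with `G = ∑ⱼ αⱼ / (1 - zⱼ X) = ∑ₖ (∑ⱼ αⱼ zⱼᵏ) Xᵏ`.
Taking logarithmic derivatives, `∑ᵢ wᵢ^(p+1)` is `∑ⱼ zⱼ^(p+1)` minus the `Xᵖ`-coefficient of
`G⁻¹ G'`. Since `G` has constant term `1`, the coefficients of `G⁻¹ = ∑ₛ (1 - G)ˢ` are signed
sums over compositions, which after reindexing give the sum `∑'`.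
-/

open Finset

namespace Finset

theorem sum_Icc_sum_range_add {M : Type*} [AddCommMonoid M] (f : ℕ → M) (p : ℕ) :
    ∑ q ∈ Icc 1 (p - 1), ∑ r ∈ range (p - q), f (q + r) = ∑ m ∈ Icc 1 (p - 1), m • f m := by
  calc ∑ q ∈ Icc 1 (p - 1), ∑ r ∈ range (p - q), f (q + r)
      = ∑ q ∈ Icc 1 (p - 1), ∑ m ∈ Icc q (p - 1), f m := by
        refine sum_congr rfl fun q hq => ?_
        rw [← Ico_add_one_right_eq_Icc, sum_Ico_eq_sum_range]
        congr 2
        rw [mem_Icc] at hq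
        omega
    _ = ∑ m ∈ Icc 1 (p - 1), ∑ _q ∈ Icc 1 m, f m :=
        sum_comm' fun q m => by simp only [mem_Icc]; omega
    _ = ∑ m ∈ Icc 1 (p - 1), m • f m := by simp

theorem sum_antidiagonal_succ_right_eq_sum_Icc {M : Type*} [AddCommMonoid M] (f : ℕ → ℕ → M)
    (k : ℕ) : ∑ ij ∈ antidiagonal k, f ij.1 (ij.2 + 1) = ∑ m ∈ Icc 1 (k + 1), f (k + 1 - m) m := by
  rw [← Nat.sum_antidiagonal_swap, ← Ico_add_one_right_eq_Icc, sum_Ico_eq_sum_range]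
  simp only [Prod.fst_swap, Prod.snd_swap]
  rw [Nat.sum_antidiagonal_eq_sum_range_succ (fun i j => f j (i + 1))]
  refine sum_congr (by simp) fun m hm => ?_
  rw [mem_range] at hm
  congr 1 <;> omega

end Finset

section Compositions

variable {R : Type*} [CommRing R] (A : ℕ → R)

def compositionSum (s k : ℕ) : R :=
  ∑ h ∈ (Nat.antidiagonalTuple s k).filter (fun h => ∀ t, 1 ≤ h t), ∏ t, A (h t)

/-- The `k`-th coefficient of `(1 + ∑_{i ≥ 1} A i Xⁱ)⁻¹`; the value `A 0` plays no role. -/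
def invCoeff (k : ℕ) : R :=
  ∑ s ∈ range (k + 1), (-1) ^ s * compositionSum A s k

theorem compositionSum_zero_zero : compositionSum A 0 0 = 1 := by
  simp [compositionSum, Nat.antidiagonalTuple_zero_zero]

theorem compositionSum_zero_of_pos {k : ℕ} (hk : 0 < k) : compositionSum A 0 k = 0 := by
  obtain ⟨k, rfl⟩ := Nat.exists_eq_add_of_lt hk
  simp [compositionSum, Nat.antidiagonalTuple_zero_succ]

theorem compositionSum_eq_zero_of_lt {s k : ℕ} (h : k < s) : compositionSum A s k = 0 := by
  refine sum_eq_zero fun x hx => absurd h (not_lt.2 ?_)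
  rw [mem_filter, Nat.mem_antidiagonalTuple] at hx
  calc s = ∑ _t : Fin s, 1 := by simp
    _ ≤ ∑ t, x t := sum_le_sum fun t _ => hx.2 t
    _ = k := hx.1

theorem compositionSum_succ (s k : ℕ) :
    compositionSum A (s + 1) k = ∑ j ∈ Icc 1 k, A j * compositionSum A s (k - j) := by
  simp only [compositionSum, mul_sum]
  rw [sum_sigma']
  refine sum_nbij' (fun h => ⟨h 0, Fin.tail h⟩) (fun x => Fin.cons x.1 x.2) ?_ ?_
    (fun h _ => Fin.cons_self_tail h) (fun x _ => by simp) (fun h _ => Fin.prod_univ_succ _)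
  · intro h hh
    simp only [mem_filter, Nat.mem_antidiagonalTuple, Fin.sum_univ_succ] at hh
    simp only [mem_sigma, mem_Icc, mem_filter, Nat.mem_antidiagonalTuple, Fin.tail]
    exact ⟨⟨hh.2 0, by omega⟩, by omega, fun t => hh.2 t.succ⟩
  · rintro ⟨j, g⟩ hx
    simp only [mem_sigma, mem_Icc, mem_filter, Nat.mem_antidiagonalTuple] at hx
    simp only [mem_filter, Nat.mem_antidiagonalTuple, Fin.sum_univ_succ, Fin.cons_zero,
      Fin.cons_succ, Fin.forall_fin_succ]
    exact ⟨by omega, hx.1.1, hx.2.2⟩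

theorem invCoeff_zero : invCoeff A 0 = 1 := by
  simp [invCoeff, compositionSum_zero_zero]

theorem invCoeff_of_pos {k : ℕ} (hk : 0 < k) :
    invCoeff A k = -∑ s ∈ range k, (-1) ^ s * compositionSum A (s + 1) k := by
  rw [invCoeff, sum_range_succ', compositionSum_zero_of_pos A hk, mul_zero, add_zero,
    ← sum_neg_distrib]
  exact sum_congr rfl fun s _ => by ring

theorem invCoeff_eq_neg_sum {k : ℕ} (hk : 0 < k) :
    invCoeff A k = -∑ j ∈ Icc 1 k, A j * invCoeff A (k - j) := by
  rw [invCoeff_of_pos A hk]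
  simp only [compositionSum_succ, mul_sum]
  rw [sum_comm]
  refine congrArg _ (sum_congr rfl fun j hj => ?_)
  rw [invCoeff, mul_sum]
  have hjk : k - j + 1 ≤ k := by rw [mem_Icc] at hj; omega
  rw [← sum_range_add_sum_Ico _ hjk, sum_eq_zero (s := Ico _ _), add_zero]
  · exact sum_congr rfl fun s _ => by ring
  · intro s hs
    rw [mem_Ico] at hs
    rw [compositionSum_eq_zero_of_lt A (by omega), mul_zero, mul_zero]

theorem sum_Icc_two_compositionSum {k : ℕ} (hk : 0 < k) :
    ∑ s ∈ Icc 2 (k + 1), (-1) ^ s * compositionSum A (s - 1) k = -invCoeff A k := by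
  rw [invCoeff_of_pos A hk, neg_neg, ← Ico_add_one_right_eq_Icc, sum_Ico_eq_sum_range]
  refine sum_congr (by simp) fun s _ => ?_
  rw [show 2 + s - 1 = s + 1 by omega, pow_add]
  ring

theorem sum_signed_compositions_eq (p : ℕ) :
    ∑ q ∈ Icc 1 (p - 1), ∑ r ∈ range (p - q), ∑ s ∈ Icc 2 (p - q - r + 1),
      ∑ h ∈ (Nat.antidiagonalTuple (s - 1) (p - q - r)).filter (fun h => ∀ t, 1 ≤ h t),
        (-1) ^ s * (∏ t, A (h t)) * A (q + r)
      = -∑ m ∈ Icc 1 (p - 1), m * A m * invCoeff A (p - m) := by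
  have inner : ∀ q ∈ Icc 1 (p - 1), ∀ r ∈ range (p - q),
      ∑ s ∈ Icc 2 (p - q - r + 1),
        ∑ h ∈ (Nat.antidiagonalTuple (s - 1) (p - q - r)).filter (fun h => ∀ t, 1 ≤ h t),
          (-1) ^ s * (∏ t, A (h t)) * A (q + r)
        = -(A (q + r) * invCoeff A (p - (q + r))) := by
    intro q _ r hr
    rw [mem_range] at hr
    simp only [← sum_mul, ← mul_sum]
    have h := sum_Icc_two_compositionSum A (k := p - (q + r)) (by omega)
    simp only [compositionSum] at h
    rw [Nat.sub_sub, h]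
    ring
  rw [sum_congr rfl fun q hq => sum_congr rfl (inner q hq),
    sum_Icc_sum_range_add (fun m => -(A m * invCoeff A (p - m))), ← sum_neg_distrib]
  exact sum_congr rfl fun m _ => by rw [nsmul_eq_mul]; ring

end Compositions

namespace PowerSeries

section GeometricSeries

variable {R : Type*} [CommRing R]

def geom (a : R) : R⟦X⟧ := mk fun k => a ^ k

theorem one_sub_C_mul_X_mul_geom (a : R) : (1 - C a * X) * geom a = 1 := by
  have h := congrArg (rescale a) (mk_one_mul_one_sub_eq_one R)
  rw [map_mul, map_sub, map_one, rescale_X, rescale_mk] at h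
  simpa [geom, mul_comm] using h

theorem derivative_multiset_prod_one_sub_C_mul_X (M : Multiset R) :
    d⁄dX R (M.map fun a => 1 - C a * X).prod
      = -((M.map fun a => 1 - C a * X).prod * (M.map fun a => C a * geom a).sum) := by
  induction M using Multiset.induction with
  | empty => simp
  | cons a M ih =>
    have hgeom := one_sub_C_mul_X_mul_geom a
    simp only [Multiset.map_cons, Multiset.prod_cons, Multiset.sum_cons, Derivation.leibniz,
      smul_eq_mul, ih, map_sub, Derivation.map_one_eq_zero, derivative_C, derivative_X]
    linear_combination (C a * (M.map fun a => 1 - C a * X).prod) * hgeom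

theorem constantCoeff_multiset_prod_one_sub_C_mul_X (M : Multiset R) :
    constantCoeff (M.map fun a => 1 - C a * X).prod = 1 := by
  simp [map_multiset_prod]

theorem coeff_multiset_sum_C_mul_geom (M : Multiset R) (m : ℕ) :
    coeff m (M.map fun a => C a * geom a).sum = (M.map fun a => a ^ (m + 1)).sum := by
  simp [map_multiset_sum, Multiset.map_map, geom, pow_succ', coeff_C_mul]

theorem sum_C_mul_prod_erase_one_sub_C_mul_X {ι : Type*} [Fintype ι] [DecidableEq ι]
    (z c : ι → R) :
    ∑ j, C (c j) * ∏ i ∈ univ.erase j, (1 - C (z i) * X)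
      = (∏ i, (1 - C (z i) * X)) * ∑ j, C (c j) * geom (z j) := by
  rw [mul_sum]
  refine sum_congr rfl fun j _ => ?_
  rw [← prod_erase_mul _ _ (mem_univ j)]
  linear_combination (-(C (c j)) * ∏ i ∈ univ.erase j, (1 - C (z i) * X)) *
    one_sub_C_mul_X_mul_geom (z j)

end GeometricSeries

section LogarithmicDerivative

variable {K : Type*} [Field K]

theorem multiset_sum_C_mul_geom_eq_of_prod_eq {M N : Multiset K} {G : K⟦X⟧}
    (h : (M.map fun a => 1 - C a * X).prod = (N.map fun a => 1 - C a * X).prod * G) :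
    (M.map fun a => C a * geom a).sum = (N.map fun a => C a * geom a).sum - G⁻¹ * d⁄dX K G := by
  have hG : constantCoeff G = 1 := by
    simpa [constantCoeff_multiset_prod_one_sub_C_mul_X] using (congrArg constantCoeff h).symm
  have hPN : (N.map fun a => 1 - C a * X).prod ≠ 0 := fun h0 => by
    simpa [h0] using constantCoeff_multiset_prod_one_sub_C_mul_X N
  have hder := congrArg (d⁄dX K) h
  rw [derivative_multiset_prod_one_sub_C_mul_X, Derivation.leibniz, smul_eq_mul, smul_eq_mul,
    derivative_multiset_prod_one_sub_C_mul_X, h] at hder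
  have hinv : G⁻¹ * G = 1 := PowerSeries.inv_mul_cancel G (by simp [hG])
  have key : G * (M.map fun a => C a * geom a).sum
      = G * (N.map fun a => C a * geom a).sum - d⁄dX K G :=
    mul_left_cancel₀ hPN (by linear_combination -hder)
  linear_combination G⁻¹ * key - ((M.map fun a => C a * geom a).sum
    - (N.map fun a => C a * geom a).sum) * hinv

theorem coeff_inv_eq_invCoeff {G : K⟦X⟧} (hG : constantCoeff G = 1) (k : ℕ) :
    coeff k G⁻¹ = invCoeff (fun i => coeff i G) k := by
  suffices mk (invCoeff fun i => coeff i G) = G⁻¹ by rw [← this, coeff_mk]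
  rw [PowerSeries.eq_inv_iff_mul_eq_one (by simp [hG])]
  ext (_ | k)
  · simp [coeff_mul, invCoeff_zero, hG]
  · rw [coeff_mul, Nat.sum_antidiagonal_succ', coeff_mk, coeff_zero_eq_constantCoeff, hG,
      mul_one, coeff_one, if_neg k.succ_ne_zero]
    simp only [coeff_mk]
    rw [sum_antidiagonal_succ_right_eq_sum_Icc
      (fun i j => invCoeff (fun i => coeff i G) i * coeff j G), invCoeff_eq_neg_sum _ k.succ_pos]
    simp [mul_comm]

theorem coeff_inv_mul_derivative {G : K⟦X⟧} (hG : constantCoeff G = 1) (k : ℕ) :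
    coeff k (G⁻¹ * d⁄dX K G)
      = ∑ m ∈ Icc 1 (k + 1), m * coeff m G * invCoeff (fun i => coeff i G) (k + 1 - m) := by
  simp only [coeff_mul, coeff_derivative, coeff_inv_eq_invCoeff hG, ← Nat.cast_add_one]
  rw [sum_antidiagonal_succ_right_eq_sum_Icc
    (fun i j => invCoeff (fun i => coeff i G) i * (coeff j G * j))]
  exact sum_congr rfl fun m _ => by ring

end LogarithmicDerivative

end PowerSeries

namespace Polynomial

theorem reflect_multiset_prod_X_sub_C {R : Type*} [CommRing R] [Nontrivial R]
    (M : Multiset R) :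
    reflect (Multiset.card M) (M.map fun a => X - C a).prod
      = (M.map fun a => 1 - C a * X).prod := by
  induction M using Multiset.induction with
  | empty => simp
  | cons a M ih =>
    rw [Multiset.map_cons, Multiset.prod_cons, Multiset.card_cons, add_comm,
      reflect_mul _ _ (natDegree_X_sub_C_le a) (natDegree_multiset_prod_X_sub_C_eq_card M).le,
      ih, Multiset.map_cons, Multiset.prod_cons, reflect_sub, reflect_C, ← pow_one X,
      reflect_monomial]
    simp

variable {K ι : Type*} [Field K] [Fintype ι] [DecidableEq ι]

/-- `P ∑ⱼ λⱼ / (X - zⱼ)` for `P = ∏ⱼ (X - zⱼ)`; with all `λⱼ = 1` it is `P'`. -/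
noncomputable def weightedDerivative (z lam : ι → K) : K[X] :=
  ∑ j, C (lam j) * ∏ i ∈ univ.erase j, (X - C (z i))

theorem natDegree_prod_erase_X_sub_C (z : ι → K) (j : ι) :
    (∏ i ∈ univ.erase j, (X - C (z i))).natDegree = Fintype.card ι - 1 := by
  rw [natDegree_prod_of_monic _ _ fun i _ => monic_X_sub_C (z i)]
  simp [card_erase_of_mem]

theorem coeff_weightedDerivative_card_sub_one (z lam : ι → K) :
    (weightedDerivative z lam).coeff (Fintype.card ι - 1) = ∑ j, lam j := by
  rw [weightedDerivative, finsetSum_coeff]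
  refine sum_congr rfl fun j _ => ?_
  rw [coeff_C_mul, ← natDegree_prod_erase_X_sub_C z j,
    (monic_prod_of_monic _ _ fun i _ => monic_X_sub_C (z i)).coeff_natDegree, mul_one]

theorem natDegree_weightedDerivative {z lam : ι → K} (hlam : ∑ j, lam j ≠ 0) :
    (weightedDerivative z lam).natDegree = Fintype.card ι - 1 := by
  refine natDegree_eq_of_le_of_coeff_ne_zero ?_
    (by rwa [coeff_weightedDerivative_card_sub_one])
  exact natDegree_sum_le_of_forall_le _ _ fun j _ =>
    (natDegree_C_mul_le _ _).trans (natDegree_prod_erase_X_sub_C z j).le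

theorem reflect_weightedDerivative (z lam : ι → K) :
    reflect (Fintype.card ι - 1) (weightedDerivative z lam)
      = ∑ j, C (lam j) * ∏ i ∈ univ.erase j, (1 - C (z i) * X) := by
  rw [weightedDerivative, ← AddMonoidHom.mk'_apply (reflect _) fun f g => reflect_add f g _,
    map_sum]
  refine sum_congr rfl fun j _ => ?_
  have hcard : Multiset.card ((univ.erase j).val.map z) = Fintype.card ι - 1 := by simp
  simpa [hcard, Multiset.map_map, Function.comp_def, prod_eq_multiset_prod] using
    congrArg (C (lam j) * ·) (reflect_multiset_prod_X_sub_C ((univ.erase j).val.map z))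

theorem C_mul_prod_roots_one_sub_C_mul_X [IsAlgClosed K] {z lam : ι → K}
    (hlam : ∑ j, lam j ≠ 0) :
    C (∑ j, lam j) * ((weightedDerivative z lam).roots.map fun a => 1 - C a * X).prod
      = ∑ j, C (lam j) * ∏ i ∈ univ.erase j, (1 - C (z i) * X) := by
  have hdeg := natDegree_weightedDerivative (z := z) hlam
  have hcard : Multiset.card (weightedDerivative z lam).roots = Fintype.card ι - 1 :=
    IsAlgClosed.card_roots_eq_natDegree.trans hdeg
  have hlead : (weightedDerivative z lam).leadingCoeff = ∑ j, lam j := by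
    rw [leadingCoeff, hdeg, coeff_weightedDerivative_card_sub_one]
  have hfac : weightedDerivative z lam
      = C (∑ j, lam j) * ((weightedDerivative z lam).roots.map fun a => X - C a).prod := by
    rw [← hlead]
    exact (C_leadingCoeff_mul_prod_multiset_X_sub_C IsAlgClosed.card_roots_eq_natDegree).symm
  rw [← reflect_weightedDerivative]
  conv_rhs => rw [hfac, reflect_C_mul, ← hcard, reflect_multiset_prod_X_sub_C]

theorem prod_roots_weightedDerivative_one_sub_C_mul_X [IsAlgClosed K] {z lam α : ι → K}
    (hlam : ∑ j, lam j ≠ 0) (hα : ∀ j, α j = lam j / ∑ i, lam i) :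
    ((weightedDerivative z lam).roots.map fun a => 1 - PowerSeries.C a * PowerSeries.X).prod
      = ((univ.val.map z).map fun a => 1 - PowerSeries.C a * PowerSeries.X).prod
        * ∑ j, PowerSeries.C (α j) * PowerSeries.geom (z j) := by
  have h := congrArg Polynomial.coeToPowerSeries.ringHom
    (C_mul_prod_roots_one_sub_C_mul_X (z := z) hlam)
  simp only [map_mul, map_sum, map_multiset_prod, map_prod, Multiset.map_map, Function.comp_def,
    map_sub, map_one, Polynomial.coeToPowerSeries.ringHom_apply, Polynomial.coe_C,
    Polynomial.coe_X] at h
  rw [PowerSeries.sum_C_mul_prod_erase_one_sub_C_mul_X, ← map_sum] at h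
  have hC : PowerSeries.C (∑ j, lam j) * PowerSeries.C (∑ j, lam j)⁻¹ = 1 := by
    rw [← map_mul, mul_inv_cancel₀ hlam, map_one]
  have hG : ∑ j, PowerSeries.C (α j) * PowerSeries.geom (z j)
      = PowerSeries.C (∑ i, lam i)⁻¹ * ∑ j, PowerSeries.C (lam j) * PowerSeries.geom (z j) := by
    rw [mul_sum]
    exact sum_congr rfl fun j _ => by rw [hα, div_eq_mul_inv, map_mul]; ring
  rw [hG, Multiset.map_map, ← prod_eq_multiset_prod]
  simp only [Function.comp_apply]
  linear_combination PowerSeries.C (∑ i, lam i)⁻¹ * h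
    - ((weightedDerivative z lam).roots.map fun a => 1 - PowerSeries.C a * PowerSeries.X).prod * hC

theorem multiset_sum_roots_weightedDerivative_pow_succ [IsAlgClosed K] {z lam α : ι → K}
    (hlam : ∑ j, lam j ≠ 0) (hα : ∀ j, α j = lam j / ∑ i, lam i) (p : ℕ) :
    ((weightedDerivative z lam).roots.map fun w => w ^ (p + 1)).sum
      = ∑ j, z j ^ (p + 1) - ∑ m ∈ Icc 1 (p + 1), m * (∑ j, α j * z j ^ m)
          * invCoeff (fun k => ∑ j, α j * z j ^ k) (p + 1 - m) := by
  set G := ∑ j, PowerSeries.C (α j) * PowerSeries.geom (z j)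
  have hcoeff : ∀ k, PowerSeries.coeff k G = ∑ j, α j * z j ^ k := by
    simp [G, PowerSeries.geom, PowerSeries.coeff_C_mul]
  have hG : PowerSeries.constantCoeff G = 1 := by
    rw [← PowerSeries.coeff_zero_eq_constantCoeff_apply, hcoeff]
    simp [hα, ← sum_div, div_self hlam]
  have h := congrArg (PowerSeries.coeff p) (PowerSeries.multiset_sum_C_mul_geom_eq_of_prod_eq
    (prod_roots_weightedDerivative_one_sub_C_mul_X (z := z) hlam hα))
  rw [map_sub, PowerSeries.coeff_multiset_sum_C_mul_geom,
    PowerSeries.coeff_multiset_sum_C_mul_geom, PowerSeries.coeff_inv_mul_derivative hG] at h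
  simp only [hcoeff] at h
  rw [h, Multiset.map_map, ← sum_eq_multiset_sum]
  rfl

end Polynomial

open Polynomial

theorem statement8_general
    (n : ℕ) (z : Fin n → ℂ) (lam : Fin n → ℂ)
    (hΛ : ∑ j, lam j ≠ 0)
    (α : Fin n → ℂ) (hα : ∀ j, α j = lam j / ∑ i, lam i)
    (p : ℕ) (hp : 1 ≤ p) :
    ((n : ℂ) - 1)⁻¹ *
        (((∑ j, Polynomial.C (lam j) *
              ∏ i ∈ Finset.univ.erase j, (X - C (z i))).roots.map
            (fun w => w ^ p)).sum)
      = ((n : ℂ) / ((n : ℂ) - 1)) * ((n : ℂ)⁻¹ * ∑ j, z j ^ p)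
        - ((p : ℂ) / ((n : ℂ) - 1)) * ∑ j, α j * z j ^ p
        + ((n : ℂ) - 1)⁻¹ *
            ∑ q ∈ Finset.Icc 1 (p - 1), ∑ r ∈ Finset.range (p - q),
              ∑ s ∈ Finset.Icc 2 (p - q - r + 1),
                ∑ h ∈ (Finset.Nat.antidiagonalTuple (s - 1) (p - q - r)).filter
                    (fun h => ∀ t, 1 ≤ h t),
                  (-1 : ℂ) ^ s * (∏ t, (∑ j, α j * z j ^ (h t))) *
                    (∑ j, α j * z j ^ (q + r)) := by
  obtain ⟨p, rfl⟩ := Nat.exists_eq_add_of_le' hp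
  have hn : (n : ℂ) * (n : ℂ)⁻¹ = 1 := by
    refine mul_inv_cancel₀ fun h => hΛ ?_
    obtain rfl : n = 0 := Nat.cast_eq_zero.1 h
    simp
  have hroots := multiset_sum_roots_weightedDerivative_pow_succ (z := z) hΛ hα p
  rw [sum_Icc_succ_top (by omega), Nat.sub_self, invCoeff_zero] at hroots
  rw [sum_signed_compositions_eq (fun k => ∑ j, α j * z j ^ k), Nat.add_sub_cancel]
  change ((n : ℂ) - 1)⁻¹ * ((weightedDerivative z lam).roots.map _).sum = _
  rw [hroots]
  linear_combination (-((n : ℂ) - 1)⁻¹ * ∑ j, z j ^ (p + 1)) * hn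

/-- Let `P(z) = (z - z₁)⋯(z - zₙ)`, `λ₁, …, λₙ ∈ ℂ` with
`Λ = ∑ λ_j ≠ 0`, `α_j = λ_j/Λ`, and `Q(z) = P(z) ∑_j λ_j/(z - z_j)` (of degree `n-1`).
Then for every `p ≥ 1`, the mean of the `p`-th powers of the zeros of `Q` (with
multiplicity) equals
`(n/(n-1))·(1/n)∑_j z_jᵖ − (p/(n-1))∑_j α_j z_jᵖ
  + (1/(n-1)) ∑' (-1)ˢ ∏_{t=1}^{s-1}(∑_j α_j z_j^{h_t}) · ∑_j α_j z_j^{q+r}`,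
where `∑'` runs over `q ∈ {1,…,p-1}`, `r ∈ {0,…,p-q-1}`, `s ∈ {2,…,p-q-r+1}` and all
tuples `(h₁,…,h_{s-1})` of positive integers with `h₁ + ⋯ + h_{s-1} = p - q - r`. -/
theorem statement8
    (n : ℕ) (hn : 2 ≤ n) (z : Fin n → ℂ) (lam : Fin n → ℂ)
    (hΛ : ∑ j, lam j ≠ 0)
    (α : Fin n → ℂ) (hα : ∀ j, α j = lam j / ∑ i, lam i)
    (p : ℕ) (hp : 1 ≤ p) :
    ((n : ℂ) - 1)⁻¹ *
        (((∑ j, Polynomial.C (lam j) *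
              ∏ i ∈ Finset.univ.erase j, (X - C (z i))).roots.map
            (fun w => w ^ p)).sum)
      = ((n : ℂ) / ((n : ℂ) - 1)) * ((n : ℂ)⁻¹ * ∑ j, z j ^ p)
        - ((p : ℂ) / ((n : ℂ) - 1)) * ∑ j, α j * z j ^ p
        + ((n : ℂ) - 1)⁻¹ *
            ∑ q ∈ Finset.Icc 1 (p - 1), ∑ r ∈ Finset.range (p - q),
              ∑ s ∈ Finset.Icc 2 (p - q - r + 1),
                ∑ h ∈ (Finset.Nat.antidiagonalTuple (s - 1) (p - q - r)).filter
                    (fun h => ∀ t, 1 ≤ h t),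
                  (-1 : ℂ) ^ s * (∏ t, (∑ j, α j * z j ^ (h t))) *
                    (∑ j, α j * z j ^ (q + r)) :=
  statement8_general n z lam hΛ α hα p hp
end

section
/- For every p ∈ ℕ there is a constant C_p > 0, depending only on p, such that for every n ≥ 2 and all z₁, …, zₙ ∈ ℂ with |z_j| = 1 for all j, the critical points w₁, …, w_{n−1} of P(z) := (z − z₁)⋯(z − zₙ) (i.e. the zeros of P′, counted with multiplicity) satisfy |(1/(n−1)) ∑_{i=1}^{n−1} wᵢᵖ − (1/n) ∑_{j=1}^n z_jᵖ| ≤ C_p/n. -/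
/-!
Write `Π_S = ∑ₖ pₖ(S) Xᵏ` for the generating series of the power sums `pₖ(S) = ∑_{s ∈ S} sᵏ`
of a multiset `S`. Reversing `P' = n ∏ (X - w)` gives `n ∏ (1 - w X) = ∏ (1 - z X) · Π_Z`, and
taking logarithmic derivatives turns this into `Π_Z (Π_W + 1 - Π_Z) = -X Π_Z'`. Since the
constant term `n` of `Π_Z` dominates all its coefficients when `|z| = 1`, comparing coefficients
bounds `|pₖ(W) - pₖ(Z)|` by `2ᵏ`, independently of `n`; the claim follows after dividing by
`n - 1` and `n`.
-/

open Polynomial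
open scoped PowerSeries

namespace PowerSeries

section CommRing

variable {R : Type*} [CommRing R]

theorem mk_pow_mul_one_sub_C_mul_X (a : R) : mk (a ^ ·) * (1 - C a * X) = 1 := by
  simpa [rescale_mk] using congrArg (rescale a) (mk_one_mul_one_sub_eq_one R)

theorem coeff_X_mul_derivative (f : R⟦X⟧) (q : ℕ) :
    coeff q (X * d⁄dX R f) = q * coeff q f := by
  rcases q with _ | q
  · simp
  · rw [coeff_succ_X_mul, coeff_derivative, mul_comm]
    push_cast
    rfl

end CommRing

theorem norm_coeff_le_of_mul_eq_neg_X_mul_derivative {𝕜 : Type*} [NormedField 𝕜]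
    {φ ψ : 𝕜⟦X⟧} (hφ0 : constantCoeff φ ≠ 0) (hφ : ∀ k, ‖coeff k φ‖ ≤ ‖constantCoeff φ‖)
    (h : φ * ψ = -(X * d⁄dX 𝕜 φ)) (q : ℕ) :
    ‖coeff q ψ‖ ≤ 2 ^ q - 1 := by
  induction q using Nat.strong_induction_on with
  | _ q ih =>
    have hq : constantCoeff φ * coeff q ψ
        = -(q * coeff q φ) - ∑ k ∈ Finset.range q, coeff (q - k) φ * coeff k ψ := by
      have := congrArg (coeff q) h
      rw [coeff_mul, ← Finset.Nat.sum_antidiagonal_swap, map_neg,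
        coeff_X_mul_derivative] at this
      simp only [Prod.fst_swap, Prod.snd_swap] at this
      rw [Finset.Nat.sum_antidiagonal_eq_sum_range_succ (fun i j => coeff j φ * coeff i ψ),
        Finset.sum_range_succ, Nat.sub_self, coeff_zero_eq_constantCoeff_apply] at this
      linear_combination this
    have hgeom : ∑ k ∈ Finset.range q, ((2 : ℝ) ^ k - 1) = 2 ^ q - 1 - q := by
      rw [Finset.sum_sub_distrib, geom_sum_eq (by norm_num), Finset.sum_const,
        Finset.card_range]
      norm_num
    refine le_of_mul_le_mul_left ?_ (norm_pos_iff.mpr hφ0)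
    calc ‖constantCoeff φ‖ * ‖coeff q ψ‖
        = ‖-(q * coeff q φ) - ∑ k ∈ Finset.range q, coeff (q - k) φ * coeff k ψ‖ := by
          rw [← hq, norm_mul]
      _ ≤ q * ‖constantCoeff φ‖ + ∑ k ∈ Finset.range q, ‖constantCoeff φ‖ * (2 ^ k - 1) := by
          refine (norm_sub_le _ _).trans (add_le_add ?_ ((norm_sum_le _ _).trans ?_))
          · rw [norm_neg, norm_mul]
            gcongr
            · simpa using Nat.norm_cast_le (α := 𝕜) q
            · exact hφ q
          · refine Finset.sum_le_sum fun k hk => ?_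
            rw [norm_mul]
            exact mul_le_mul (hφ _) (ih k (Finset.mem_range.mp hk)) (norm_nonneg _)
              (norm_nonneg _)
      _ = ‖constantCoeff φ‖ * (2 ^ q - 1) := by
          rw [← Finset.mul_sum, hgeom]
          ring

end PowerSeries

namespace Polynomial

section CommRing

variable {R : Type*} [CommRing R]

theorem coeff_X_mul_derivative (f : R[X]) (i : ℕ) :
    (X * derivative f).coeff i = i * f.coeff i := by
  rcases i with _ | i
  · simp
  · rw [coeff_X_mul, coeff_derivative, mul_comm]
    push_cast
    rfl

theorem reflect_derivative {f : R[X]} {N : ℕ} (hf : f.natDegree ≤ N + 1) :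
    reflect N (derivative f) =
      C ((N + 1 : ℕ) : R) * reflect (N + 1) f - X * derivative (reflect (N + 1) f) := by
  ext i
  rw [coeff_sub, coeff_C_mul, coeff_X_mul_derivative, coeff_reflect, coeff_reflect,
    coeff_derivative, ← sub_mul]
  rcases le_or_gt i N with hi | hi
  · rw [revAt_le hi, revAt_le (by omega), show N - i + 1 = N + 1 - i by omega]
    push_cast [Nat.cast_sub hi]
    ring
  · rw [revAt_eq_self_of_lt hi,
      coeff_eq_zero_of_natDegree_lt (by omega : f.natDegree < i + 1), zero_mul]
    rcases (Nat.succ_le_of_lt hi).eq_or_lt with rfl | hi'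
    · simp
    · rw [revAt_eq_self_of_lt hi', coeff_eq_zero_of_natDegree_lt (by omega), mul_zero]

end CommRing

section IsAlgClosed

variable {K : Type*} [Field K] [IsAlgClosed K] [CharZero K]

theorem derivative_prod_X_sub_C_eq_C_card_mul_prod_roots (Z : Multiset K) :
    derivative (Z.map (X - C ·)).prod =
      C (Multiset.card Z : K) * ((derivative (Z.map (X - C ·)).prod).roots.map (X - C ·)).prod := by
  conv_lhs => rw [(IsAlgClosed.splits (derivative (Z.map (X - C ·)).prod)).eq_prod_roots]
  rw [leadingCoeff_derivative,
    (monic_multiset_prod_of_monic _ _ fun a _ => monic_X_sub_C a).leadingCoeff,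
    natDegree_multiset_prod_X_sub_C_eq_card, one_mul]

theorem card_roots_derivative_prod_X_sub_C (Z : Multiset K) :
    Multiset.card (derivative (Z.map (X - C ·)).prod).roots = Multiset.card Z - 1 := by
  rw [splits_iff_card_roots.mp (IsAlgClosed.splits _), natDegree_derivative,
    natDegree_multiset_prod_X_sub_C_eq_card]

end IsAlgClosed

end Polynomial

namespace Multiset

section CommRing

variable {R : Type*} [CommRing R]

noncomputable def prodOneSubMulX (s : Multiset R) : R[X] := (s.map fun a => 1 - C a * X).prod

noncomputable def powerSumSeries (s : Multiset R) : R⟦X⟧ :=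
  PowerSeries.mk fun k => (s.map (· ^ k)).sum

theorem coeff_powerSumSeries (s : Multiset R) (k : ℕ) :
    PowerSeries.coeff k s.powerSumSeries = (s.map (· ^ k)).sum :=
  PowerSeries.coeff_mk _ _

theorem prodOneSubMulX_cons (a : R) (s : Multiset R) :
    (a ::ₘ s).prodOneSubMulX = (1 - C a * X) * s.prodOneSubMulX := by
  simp [prodOneSubMulX]

theorem powerSumSeries_cons (a : R) (s : Multiset R) :
    (a ::ₘ s).powerSumSeries = PowerSeries.mk (a ^ ·) + s.powerSumSeries := by
  ext k
  simp [powerSumSeries]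

theorem reflect_prod_X_sub_C [Nontrivial R] (s : Multiset R) :
    reflect (card s) (s.map (X - C ·)).prod = s.prodOneSubMulX := by
  induction s using Multiset.induction_on with
  | empty => simp [prodOneSubMulX, reflect_one]
  | cons a s ih =>
    rw [card_cons, map_cons, prod_cons, add_comm, reflect_mul _ _ (natDegree_X_sub_C_le a)
      (natDegree_multiset_prod_X_sub_C_eq_card s).le, ih, reflect_sub, reflect_one_X,
      reflect_C, pow_one, prodOneSubMulX_cons]

theorem prodOneSubMulX_mul_powerSumSeries (s : Multiset R) :
    (s.prodOneSubMulX : R⟦X⟧) * s.powerSumSeries =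
      (card s : R⟦X⟧) * (s.prodOneSubMulX : R⟦X⟧) -
        PowerSeries.X * d⁄dX R (s.prodOneSubMulX : R⟦X⟧) := by
  induction s using Multiset.induction_on with
  | empty => ext k; simp [prodOneSubMulX, powerSumSeries]
  | cons a s ih =>
    rw [prodOneSubMulX_cons, powerSumSeries_cons, card_cons]
    simp only [Polynomial.coe_mul, Polynomial.coe_sub, Polynomial.coe_one, Polynomial.coe_C,
      Polynomial.coe_X, Nat.cast_add, Nat.cast_one, Derivation.leibniz, smul_eq_mul, map_sub,
      Derivation.map_one_eq_zero, PowerSeries.derivative_X, PowerSeries.derivative_C, mul_one,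
      mul_zero, add_zero, zero_sub, mul_neg]
    linear_combination (s.prodOneSubMulX : R⟦X⟧) * PowerSeries.mk_pow_mul_one_sub_C_mul_X a
      + (1 - PowerSeries.C a * PowerSeries.X) * ih

theorem powerSumSeries_mul_eq_of_derivative_eq [Nontrivial R] {Z W : Multiset R}
    (hcard : card Z = card W + 1)
    (hW : derivative (Z.map (X - C ·)).prod = C (card Z : R) * (W.map (X - C ·)).prod) :
    Z.powerSumSeries * (W.powerSumSeries + 1 - Z.powerSumSeries) =
      -(PowerSeries.X * d⁄dX R Z.powerSumSeries) := by
  have hZ := prodOneSubMulX_mul_powerSumSeries Z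
  have hW' := prodOneSubMulX_mul_powerSumSeries W
  have hrefl := congrArg (reflect (card W)) hW
  rw [reflect_derivative (by simp [hcard]), reflect_C_mul, ← hcard, reflect_prod_X_sub_C,
    reflect_prod_X_sub_C] at hrefl
  have hrev : (card Z : R⟦X⟧) * W.prodOneSubMulX = Z.prodOneSubMulX * Z.powerSumSeries := by
    rw [hZ, PowerSeries.derivative_coe]
    have := congrArg (fun f : R[X] => (f : R⟦X⟧)) hrefl
    simp only [Polynomial.coe_mul, Polynomial.coe_sub, Polynomial.coe_C, Polynomial.coe_X] at this
    simpa only [map_natCast] using this.symm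
  have hrev' := congrArg (d⁄dX R) hrev
  simp only [Derivation.leibniz, smul_eq_mul, Derivation.map_natCast, mul_zero, add_zero] at hrev'
  have hunit : IsUnit (Z.prodOneSubMulX : R⟦X⟧) := by
    rw [PowerSeries.isUnit_iff_constantCoeff]
    simp [prodOneSubMulX, coeff_zero_multiset_prod, Multiset.map_map]
  apply hunit.mul_left_cancel
  rw [hcard] at hrev hZ hrev'
  push_cast at hrev hZ hrev'
  linear_combination (card W - W.powerSumSeries) * hrev + ((card W : R⟦X⟧) + 1) * hW'
    - PowerSeries.X * hrev' - Z.powerSumSeries * hZ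

end CommRing

theorem norm_sum_map_pow_le_card {𝕜 : Type*} [SeminormedRing 𝕜] [NormOneClass 𝕜]
    {s : Multiset 𝕜} (hs : ∀ a ∈ s, ‖a‖ ≤ 1) (k : ℕ) : ‖(s.map (· ^ k)).sum‖ ≤ card s := by
  calc ‖(s.map (· ^ k)).sum‖ ≤ (s.map fun a => ‖a ^ k‖).sum := by
        simpa [Multiset.map_map] using norm_multiset_sum_le (s.map (· ^ k))
    _ ≤ (s.map fun _ => (1 : ℝ)).sum := Multiset.sum_map_le_sum_map _ _ fun a ha =>
        (norm_pow_le a k).trans (pow_le_one₀ (norm_nonneg a) (hs a ha))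
    _ = card s := by simp

theorem norm_sum_map_pow_roots_derivative_sub_le {Z : Multiset ℂ} (hZ : Z ≠ 0)
    (hZ1 : ∀ z ∈ Z, ‖z‖ ≤ 1) (q : ℕ) :
    ‖((derivative (Z.map (X - C ·)).prod).roots.map (· ^ q)).sum - (Z.map (· ^ q)).sum‖
      ≤ 2 ^ q := by
  set W := (derivative (Z.map (X - C ·)).prod).roots
  have hcard : card Z = card W + 1 := by
    have := card_pos.mpr hZ
    rw [card_roots_derivative_prod_X_sub_C]
    omega
  have hseries := powerSumSeries_mul_eq_of_derivative_eq hcard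
    (derivative_prod_X_sub_C_eq_C_card_mul_prod_roots Z)
  have hconst : PowerSeries.constantCoeff Z.powerSumSeries = card Z := by
    simp [← PowerSeries.coeff_zero_eq_constantCoeff_apply, coeff_powerSumSeries]
  have hcoeff (k : ℕ) :
      ‖PowerSeries.coeff k Z.powerSumSeries‖ ≤ ‖PowerSeries.constantCoeff Z.powerSumSeries‖ := by
    simpa [hconst, coeff_powerSumSeries] using norm_sum_map_pow_le_card hZ1 k
  have hbound := PowerSeries.norm_coeff_le_of_mul_eq_neg_X_mul_derivative
    (by simp [hconst, hZ]) hcoeff hseries q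
  calc _ = ‖PowerSeries.coeff q (W.powerSumSeries + 1 - Z.powerSumSeries)
          - PowerSeries.coeff q 1‖ := by
        rw [add_sub_right_comm, _root_.map_add, add_sub_cancel_right, _root_.map_sub,
          coeff_powerSumSeries, coeff_powerSumSeries]
    _ ≤ (2 ^ q - 1) + 1 := by
        refine norm_sub_le_of_le hbound ?_
        rw [PowerSeries.coeff_one]
        split_ifs <;> simp
    _ = 2 ^ q := by ring

end Multiset

theorem norm_inv_sub_one_mul_sub_inv_mul_le {n : ℕ} (hn : 2 ≤ n) {x y : ℂ} {A : ℝ}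
    (hxy : ‖x - y‖ ≤ A) (hy : ‖y‖ ≤ n) :
    ‖((n : ℂ) - 1)⁻¹ * x - (n : ℂ)⁻¹ * y‖ ≤ 2 * (A + 1) / n := by
  have hn' : (2 : ℝ) ≤ n := by exact_mod_cast hn
  have hcast : (n : ℂ) - 1 = ((n - 1 : ℝ) : ℂ) := by push_cast; ring
  have hne : (n : ℂ) - 1 ≠ 0 := by rw [hcast]; exact_mod_cast (by linarith : (n : ℝ) - 1 ≠ 0)
  have hn0 : (n : ℂ) ≠ 0 := by norm_cast; omega
  have hnorm : ‖((n : ℂ) - 1)⁻¹‖ = (n - 1 : ℝ)⁻¹ := by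
    rw [hcast, norm_inv, Complex.norm_real, Real.norm_of_nonneg (by linarith)]
  have hdiff : ((n : ℂ) - 1)⁻¹ - (n : ℂ)⁻¹ = ((n : ℂ) - 1)⁻¹ * (n : ℂ)⁻¹ := by
    field_simp
    ring
  have hpos : (0 : ℝ) ≤ (n - 1 : ℝ)⁻¹ := inv_nonneg.mpr (by linarith)
  calc ‖((n : ℂ) - 1)⁻¹ * x - (n : ℂ)⁻¹ * y‖
      = ‖((n : ℂ) - 1)⁻¹ * (x - y) + ((n : ℂ) - 1)⁻¹ * (n : ℂ)⁻¹ * y‖ := by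
        rw [← hdiff]
        ring_nf
    _ ≤ (n - 1 : ℝ)⁻¹ * A + (n - 1 : ℝ)⁻¹ * (n : ℝ)⁻¹ * n := by
        refine (norm_add_le _ _).trans (add_le_add ?_ ?_) <;>
          simp only [norm_mul, hnorm, norm_inv, Complex.norm_natCast] <;> gcongr
    _ = (A + 1) / (n - 1) := by field_simp
    _ ≤ 2 * (A + 1) / n := by
        rw [div_le_div_iff₀ (by linarith) (by linarith)]
        nlinarith [(norm_nonneg _).trans hxy]

theorem statement9_general (p : ℕ) :
    ∃ Cp : ℝ, 0 < Cp ∧ ∀ n : ℕ, 2 ≤ n → ∀ z : Fin n → ℂ,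
      (∀ j, ‖z j‖ = 1) →
      ‖(((n : ℂ) - 1)⁻¹ *
            (((Polynomial.derivative (∏ j, (X - C (z j)))).roots.map
              (fun w => w ^ p)).sum)
          - (n : ℂ)⁻¹ * ∑ j, z j ^ p)‖ ≤ Cp / n := by
  refine ⟨2 * (2 ^ p + 1), by positivity, fun n hn z hz => ?_⟩
  set Z : Multiset ℂ := Finset.univ.val.map z
  have hcard : Multiset.card Z = n := by simp [Z]
  have hZ0 : Z ≠ 0 := by rw [← Multiset.card_pos, hcard]; omega
  have hZ1 : ∀ a ∈ Z, ‖a‖ ≤ 1 := by simp [Z, hz]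
  have hprod : ∏ j, (X - C (z j)) = (Z.map (X - C ·)).prod := by
    rw [Multiset.map_map]
    exact (Finset.prod_map_val _ _).symm
  have hsum : ∑ j, z j ^ p = (Z.map (· ^ p)).sum := by
    rw [Multiset.map_map]
    exact (Finset.sum_map_val _ _).symm
  rw [hprod, hsum]
  refine norm_inv_sub_one_mul_sub_inv_mul_le hn
    (Multiset.norm_sum_map_pow_roots_derivative_sub_le hZ0 hZ1 p) ?_
  simpa [hcard] using Multiset.norm_sum_map_pow_le_card hZ1 p

/-- For every `p ≥ 1` there is a constant `C_p > 0`, depending only on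
`p`, such that for every `n ≥ 2` and all `z₁, …, zₙ` on the unit circle, the critical
points `w₁, …, w_{n-1}` (zeros of `P'` with multiplicity) of
`P(z) = (z - z₁)⋯(z - zₙ)` satisfy
`|(1/(n-1)) ∑ᵢ wᵢᵖ − (1/n) ∑ⱼ zⱼᵖ| ≤ C_p/n`. -/
theorem statement9 (p : ℕ) (hp : 1 ≤ p) :
    ∃ Cp : ℝ, 0 < Cp ∧ ∀ n : ℕ, 2 ≤ n → ∀ z : Fin n → ℂ,
      (∀ j, ‖z j‖ = 1) →
      ‖(((n : ℂ) - 1)⁻¹ *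
            (((Polynomial.derivative (∏ j, (X - C (z j)))).roots.map
              (fun w => w ^ p)).sum)
          - (n : ℂ)⁻¹ * ∑ j, z j ^ p)‖ ≤ Cp / n :=
  statement9_general p
end

section
/- Fix 0 < q < 1 and 0 < ε₀ < 1 − q. For n ≥ k+1 let Eₙ ⊂ Ω be the event that both: at least ⌊qn⌋ of the points Z₁(ω), …, Zₙ(ω) satisfy min_{1≤i≤n−k} |W_{n,i}(ω) − Z_j(ω)| < ε₀, and at least ⌊q(n−k)⌋ of the points W_{n,1}(ω), …, W_{n,n−k}(ω) satisfy min_{1≤j≤n} |Z_j(ω) − W_{n,i}(ω)| < ε₀. If almost surely μ_{S,n} converges weakly to μ_S as n → ∞, then ℙ(Eₙ holds for all sufficiently large n) = 1. -/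
open MeasureTheory Filter

/-- The empirical (probability) measure of the points `w 0, …, w (N-1)` of `ℂ`. -/
noncomputable def empirical (N : ℕ) (w : ℕ → ℂ) : Measure ℂ :=
  (N : ENNReal)⁻¹ • ∑ j ∈ Finset.range N, MeasureTheory.Measure.dirac (w j)

/-- Weak convergence of a sequence of measures on `ℂ` towards `μ`, tested against
bounded continuous real-valued functions. -/
def WeaklyConvergesTo (m : ℕ → Measure ℂ) (μ : Measure ℂ) : Prop :=
  ∀ f : BoundedContinuousFunction ℂ ℝ,
    Tendsto (fun n => ∫ x, f x ∂(m n)) atTop (nhds (∫ x, f x ∂μ))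

/-! Fix `max q 0 < q' < 1` and cover a compact set of `μ_S`-mass `> q'` by finitely many closed
`ε₀ / 4`-balls of positive mass, with union `C`, and let `U ⊇ C` be the union of the concentric
`ε₀ / 2`-balls. By the strong law of large numbers, eventually more than `q' n` of the `Z_j` lie
in `U` and every one of these balls contains some `Z_j`. Testing the weak convergence against
continuous functions squeezed between the indicators of `C ⊆ U` (or of a closed ball inside the
open one) gives the same for the `W_{n,i}`. Two points in a common `ε₀ / 2`-ball are
`ε₀`-close. -/

open Topology Metric Finset
open scoped ENNReal BoundedContinuousFunction

lemma integral_empirical (N : ℕ) (w : ℕ → ℂ) (f : ℂ →ᵇ ℝ) :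
    ∫ x, f x ∂(empirical N w) = (N : ℝ)⁻¹ * ∑ j ∈ range N, f (w j) := by
  rw [empirical, integral_smul_measure, integral_finsetSum_measure fun _ _ => f.integrable _]
  simp [integral_dirac, ENNReal.toReal_inv]

lemma floor_mul_le_of_lt_div {q q' : ℝ} {c N : ℕ} (hq : q ≤ q') (h : q' < c / N) :
    ⌊q * N⌋₊ ≤ c := by
  refine Nat.floor_le_of_le ?_
  rcases N.eq_zero_or_pos with rfl | hN
  · simp
  · have hN' : (0 : ℝ) < N := by exact_mod_cast hN
    calc q * N ≤ q' * N := by gcongr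
      _ ≤ c := ((lt_div_iff₀ hN').1 h).le

lemma exists_lt_of_pos_card_filter_div {N : ℕ} {p : ℕ → Prop} [DecidablePred p]
    (h : 0 < (#{i ∈ range N | p i} : ℝ) / N) : ∃ i < N, p i := by
  obtain ⟨i, hi⟩ := card_pos.1 (Nat.cast_pos.1 (pos_of_mul_pos_left h (by positivity)))
  rw [mem_filter, mem_range] at hi
  exact ⟨i, hi⟩

open Classical ProbabilityTheory in
lemma ae_tendsto_card_filter_div_of_iid {Ω α : Type*} [MeasurableSpace Ω] [MeasurableSpace α]
    {P : Measure Ω} [IsFiniteMeasure P] {μ : Measure α} {Z : ℕ → Ω → α}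
    (hZmeas : ∀ i, Measurable (Z i)) (hZlaw : ∀ i, Measure.map (Z i) P = μ)
    (hZindep : iIndepFun Z P) {A : Set α} (hA : MeasurableSet A) :
    ∀ᵐ ω ∂P, Tendsto (fun n : ℕ => (#{j ∈ range n | Z j ω ∈ A} : ℝ) / n) atTop
      (𝓝 (μ.real A)) := by
  set g : α → ℝ := A.indicator 1
  have hg : Measurable g := measurable_const.indicator hA
  have hint : Integrable (g ∘ Z 0) P :=
    (integrable_const (1 : ℝ)).mono' (hg.comp (hZmeas 0)).aestronglyMeasurable
      (ae_of_all _ fun ω => by by_cases h : Z 0 ω ∈ A <;> simp [g, h])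
  have hindep : Pairwise fun i j => IndepFun (g ∘ Z i) (g ∘ Z j) P :=
    fun i j hij => (hZindep.indepFun hij).comp hg hg
  have hident : ∀ i, IdentDistrib (g ∘ Z i) (g ∘ Z 0) P P := fun i =>
    IdentDistrib.comp ⟨(hZmeas i).aemeasurable, (hZmeas 0).aemeasurable, by
      rw [hZlaw i, hZlaw 0]⟩ hg
  have hmean : P[g ∘ Z 0] = μ.real A := by
    change ∫ ω, g (Z 0 ω) ∂P = _
    rw [← integral_map (hZmeas 0).aemeasurable hg.aestronglyMeasurable, hZlaw 0,
      integral_indicator_one hA]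
  filter_upwards [strong_law_ae_real (fun i => g ∘ Z i) hint hindep hident] with ω hω
  rw [hmean] at hω
  convert hω using 3 with n
  rw [natCast_card_filter]
  rfl

lemma exists_indicator_le_le_indicator {X : Type*} [TopologicalSpace X] [NormalSpace X]
    {C U : Set X} (hC : IsClosed C) (hU : IsOpen U) (hCU : C ⊆ U) :
    ∃ F : X →ᵇ ℝ, ∀ x, C.indicator 1 x ≤ F x ∧ F x ≤ U.indicator 1 x := by
  obtain ⟨F, hF0, hF1, hF01⟩ := exists_bounded_zero_one_of_closed hU.isClosed_compl hC
    (Set.disjoint_compl_left_iff_subset.2 hCU)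
  refine ⟨F, fun x => ⟨?_, ?_⟩⟩
  · by_cases hx : x ∈ C
    · simp [hx, hF1 hx]
    · simpa [hx] using (hF01 x).1
  · by_cases hx : x ∈ U
    · simpa [hx] using (hF01 x).2
    · simp [hx, hF0 hx]

open Classical in
lemma eventually_lt_card_filter_div_of_weaklyConvergesTo {μ : Measure ℂ} [IsFiniteMeasure μ]
    {N : ℕ → ℕ} {w : ℕ → ℕ → ℂ} (hw : WeaklyConvergesTo (fun n => empirical (N n) (w n)) μ)
    {C U : Set ℂ} (hC : IsClosed C) (hU : IsOpen U) (hCU : C ⊆ U) {r : ℝ}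
    (hr : r < μ.real C) :
    ∀ᶠ n in atTop, r < (#{i ∈ range (N n) | w n i ∈ U} : ℝ) / N n := by
  obtain ⟨F, hF⟩ := exists_indicator_le_le_indicator hC hU hCU
  have hCF : μ.real C ≤ ∫ x, F x ∂μ := by
    rw [← integral_indicator_one hC.measurableSet]
    exact integral_mono ((integrable_const 1).indicator hC.measurableSet) (F.integrable μ)
      fun x => (hF x).1
  filter_upwards [(hw F).eventually (lt_mem_nhds (hr.trans_le hCF))] with n hn
  rw [integral_empirical, inv_mul_eq_div] at hn
  refine hn.trans_le (div_le_div_of_nonneg_right ?_ (Nat.cast_nonneg _))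
  rw [natCast_card_filter]
  exact sum_le_sum fun i _ => by simpa [Set.indicator_apply] using (hF (w n i)).2

lemma exists_finset_lt_measure_biUnion_closedBall {α : Type*} [PseudoMetricSpace α]
    [MeasurableSpace α] (μ : Measure α) [μ.InnerRegular] {ε : ℝ} (hε : 0 < ε)
    {r : ℝ≥0∞} (hr : r < μ Set.univ) :
    ∃ T : Finset α, (∀ x ∈ T, μ (closedBall x ε) ≠ 0) ∧
      r < μ (⋃ x ∈ T, closedBall x ε) := by
  classical
  obtain ⟨K, -, hK, hrK⟩ := MeasurableSet.univ.exists_lt_isCompact hr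
  obtain ⟨T, -, hKT⟩ := hK.elim_nhds_subcover (fun x => closedBall x ε)
    fun x _ => closedBall_mem_nhds x hε
  refine ⟨{x ∈ T | μ (closedBall x ε) ≠ 0}, fun x hx => (mem_filter.1 hx).2, ?_⟩
  have hnull : μ (⋃ x ∈ {x ∈ T | ¬μ (closedBall x ε) ≠ 0}, closedBall x ε) = 0 :=
    (measure_biUnion_null_iff (Finset.countable_toSet _)).2 fun x hx =>
      not_not.1 (mem_filter.1 hx).2
  calc r < μ K := hrK
    _ ≤ μ (⋃ x ∈ T, closedBall x ε) := measure_mono hKT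
    _ = μ ((⋃ x ∈ {x ∈ T | μ (closedBall x ε) ≠ 0}, closedBall x ε) ∪
          ⋃ x ∈ {x ∈ T | ¬μ (closedBall x ε) ≠ 0}, closedBall x ε) := by
        rw [← set_biUnion_union, filter_union_filter_not_eq]
    _ ≤ _ := (measure_union_le _ _).trans_eq (by rw [hnull, add_zero])

open Classical in
lemma eventually_floor_mul_le_card_filter_exists_norm_sub_lt {E : Type*}
    [SeminormedAddCommGroup E] {z w : ℕ → ℕ → E} {M N : ℕ → ℕ} {T : Finset E}
    {ε q q' : ℝ} (hq : q ≤ q')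
    (hz : ∀ᶠ n in atTop,
      q' < (#{j ∈ range (M n) | z n j ∈ ⋃ x ∈ T, ball x (ε / 2)} : ℝ) / M n)
    (hw : ∀ x ∈ T, ∀ᶠ n in atTop,
      0 < (#{i ∈ range (N n) | w n i ∈ ball x (ε / 2)} : ℝ) / N n) :
    ∀ᶠ n in atTop,
      ⌊q * M n⌋₊ ≤ #{j ∈ range (M n) | ∃ i < N n, ‖w n i - z n j‖ < ε} := by
  filter_upwards [hz, (eventually_all_finset T).2 hw] with n hzn hwn
  refine (floor_mul_le_of_lt_div hq hzn).trans
    (card_le_card (monotone_filter_right _ fun j _ hj => ?_))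
  obtain ⟨x, hxT, hjx⟩ := Set.mem_iUnion₂.1 hj
  obtain ⟨i, hiN, hix⟩ := exists_lt_of_pos_card_filter_div (hwn x hxT)
  refine ⟨i, hiN, ?_⟩
  calc ‖w n i - z n j‖ = dist (w n i) (z n j) := (dist_eq_norm _ _).symm
    _ ≤ dist (w n i) x + dist (z n j) x := dist_triangle_right _ _ _
    _ < ε / 2 + ε / 2 := add_lt_add hix hjx
    _ = ε := add_halves ε

open Classical in
theorem statement10_general
    {Ω : Type*} [MeasurableSpace Ω] (ℙ : Measure Ω) [IsProbabilityMeasure ℙ]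
    (μS : Measure ℂ) [IsProbabilityMeasure μS]
    (Z : ℕ → Ω → ℂ) (hZmeas : ∀ i, Measurable (Z i))
    (hZlaw : ∀ i, Measure.map (Z i) ℙ = μS)
    (hZindep : ProbabilityTheory.iIndepFun Z ℙ)
    (k : ℕ)
    (W : ℕ → ℕ → Ω → ℂ)
    (q ε₀ : ℝ) (hq1 : q < 1) (hε0 : 0 < ε₀)
    (hconv : ∀ᵐ ω ∂ℙ,
      WeaklyConvergesTo (fun n => empirical (n - k) (fun j => W n j ω)) μS) :
    ∀ᵐ ω ∂ℙ, ∀ᶠ n : ℕ in atTop,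
      (⌊q * (n : ℝ)⌋₊ ≤
          ((Finset.range n).filter
            (fun j => ∃ i < n - k, ‖W n i ω - Z j ω‖ < ε₀)).card
      ∧ ⌊q * ((n - k : ℕ) : ℝ)⌋₊ ≤
          ((Finset.range (n - k)).filter
            (fun i => ∃ j < n, ‖Z j ω - W n i ω‖ < ε₀)).card) := by
  obtain ⟨q', hqq', hq'1⟩ := exists_between (max_lt hq1 one_pos)
  have hq : q ≤ q' := (le_max_left q 0).trans hqq'.le
  obtain ⟨T, hTpos, hTC⟩ := exists_finset_lt_measure_biUnion_closedBall μS
    (by positivity : 0 < ε₀ / 4) (r := ENNReal.ofReal q') (by simpa using hq'1)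
  set C := ⋃ x ∈ T, closedBall x (ε₀ / 4)
  set U := ⋃ x ∈ T, ball x (ε₀ / 2)
  have hball : ∀ x : ℂ, closedBall x (ε₀ / 4) ⊆ ball x (ε₀ / 2) :=
    fun x => closedBall_subset_ball (by linarith)
  have hCU : C ⊆ U := Set.biUnion_mono subset_rfl fun x _ => hball x
  have hqC : q' < μS.real C := (ENNReal.ofReal_lt_iff_lt_toReal
    ((le_max_right q 0).trans hqq'.le) (measure_ne_top _ _)).1 hTC
  have hT : ∀ x ∈ T, 0 < μS.real (closedBall x (ε₀ / 4)) := fun x hx =>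
    ENNReal.toReal_pos (hTpos x hx) (measure_ne_top _ _)
  have hZT : ∀ᵐ ω ∂ℙ, ∀ x ∈ T, Tendsto (fun n : ℕ =>
      (#{j ∈ range n | Z j ω ∈ ball x (ε₀ / 2)} : ℝ) / n) atTop
      (𝓝 (μS.real (ball x (ε₀ / 2)))) :=
    (ae_ball_iff T.countable_toSet).2 fun x _ =>
      ae_tendsto_card_filter_div_of_iid hZmeas hZlaw hZindep measurableSet_ball
  have hU : IsOpen U := isOpen_biUnion fun x _ => isOpen_ball
  filter_upwards [hconv, hZT, ae_tendsto_card_filter_div_of_iid hZmeas hZlaw hZindep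
    hU.measurableSet] with ω hW hZT hZU
  have hZfreq := hZU.eventually
    (lt_mem_nhds (hqC.trans_le (measureReal_mono hCU (measure_ne_top _ _))))
  have hWfreq := eventually_lt_card_filter_div_of_weaklyConvergesTo hW
    (isClosed_biUnion_finset fun x _ => isClosed_closedBall) hU hCU hqC
  have hZnear := fun x (hx : x ∈ T) => (hZT x hx).eventually
    (lt_mem_nhds ((hT x hx).trans_le (measureReal_mono (hball x) (measure_ne_top _ _))))
  have hWnear := fun x (hx : x ∈ T) => eventually_lt_card_filter_div_of_weaklyConvergesTo hW
    isClosed_closedBall isOpen_ball (hball x) (hT x hx)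
  exact (eventually_floor_mul_le_card_filter_exists_norm_sub_lt hq hZfreq hWnear).and
    (eventually_floor_mul_le_card_filter_exists_norm_sub_lt hq hWfreq hZnear)

open Classical in
/-- Let `S ⊆ ℂ` be closed, `μ_S(S) = 1`, `Z₁, Z₂, …` i.i.d. with law
`μ_S`, and `W_{n,1}, …, W_{n,n-k}` random points with empirical measures `μ_{S,n}`.
Fix `0 < q < 1` and `0 < ε₀ < 1 - q`.  If a.s. `μ_{S,n}` converges weakly to `μ_S`,
then almost surely, eventually in `n`: at least `⌊qn⌋` of `Z₁, …, Zₙ` are within `ε₀`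
of some `W_{n,i}`, and at least `⌊q(n-k)⌋` of `W_{n,1}, …, W_{n,n-k}` are within `ε₀`
of some `Z_j`. -/
theorem statement10
    {Ω : Type*} [MeasurableSpace Ω] (ℙ : Measure Ω) [IsProbabilityMeasure ℙ]
    (S : Set ℂ) (hS : IsClosed S)
    (μS : Measure ℂ) [IsProbabilityMeasure μS] (hμS : μS S = 1)
    (Z : ℕ → Ω → ℂ) (hZmeas : ∀ i, Measurable (Z i))
    (hZlaw : ∀ i, Measure.map (Z i) ℙ = μS)
    (hZindep : ProbabilityTheory.iIndepFun Z ℙ)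
    (k : ℕ) (hk : 1 ≤ k)
    (W : ℕ → ℕ → Ω → ℂ) (hWmeas : ∀ n j, Measurable (W n j))
    (q ε₀ : ℝ) (hq0 : 0 < q) (hq1 : q < 1) (hε0 : 0 < ε₀) (hε1 : ε₀ < 1 - q)
    (hconv : ∀ᵐ ω ∂ℙ,
      WeaklyConvergesTo (fun n => empirical (n - k) (fun j => W n j ω)) μS) :
    ∀ᵐ ω ∂ℙ, ∀ᶠ n : ℕ in atTop,
      (⌊q * (n : ℝ)⌋₊ ≤
          ((Finset.range n).filter
            (fun j => ∃ i < n - k, ‖W n i ω - Z j ω‖ < ε₀)).card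
      ∧ ⌊q * ((n - k : ℕ) : ℝ)⌋₊ ≤
          ((Finset.range (n - k)).filter
            (fun i => ∃ j < n, ‖Z j ω - W n i ω‖ < ε₀)).card) :=
  statement10_general ℙ μS Z hZmeas hZlaw hZindep k W q ε₀ hq1 hε0 hconv
end
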